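/- Let E be a directed graph, K a field, and X a subset of E^0. Let F be the subgraph with F^0 = E^0 \ X and F^1 = E^1 \ (s^{-1}(X) ∪ r^{-1}(X)). Then the quotient of the path algebra KE by the two-sided ideal generated by the vertices in X is isomorphic as a K-algebra to KF. -/

import Mathlib

/-- A directed graph: vertices, edges, source and range maps. -/
structure DGraph : Type 1 where
  V : Type
  Edge : Type
  s : Edge → V
  r : Edge → V

namespace DGraph

/-- A list of edges is composable if consecutive edges match up. -/
def IsComposable (G : DGraph) (l : List G.Edge) : Prop :=
  l.Chain' (fun e f => G.r e = G.s f)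

/-- A path in `G`: either a trivial path at a vertex, or a nonempty composable list of edges. -/
def GPath (G : DGraph) : Type :=
  G.V ⊕ {l : List G.Edge // l ≠ [] ∧ G.IsComposable l}

namespace GPath

variable {G : DGraph}

/-- The source of a path. -/
def src : GPath G → G.V
  | Sum.inl v => v
  | Sum.inr l => G.s (l.1.head l.2.1)

/-- The range of a path. -/
def rng : GPath G → G.V
  | Sum.inl v => v
  | Sum.inr l => G.r (l.1.getLast l.2.1)

/-- The length of a path. -/
def length : GPath G → ℕ
  | Sum.inl _ => 0
  | Sum.inr l => l.1.length

/-- The trivial path at a vertex. -/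
def ofVertex (v : G.V) : GPath G := Sum.inl v

/-- The length-one path given by an edge. -/
def ofEdge (e : G.Edge) : GPath G :=
  Sum.inr ⟨[e], by
    refine ⟨by simp, ?_⟩
    unfold IsComposable
    first | exact List.chain'_singleton e | exact List.isChain_singleton e | constructor | simp [List.Chain']⟩

/-- Concatenation of composable paths. -/
def comp : (p q : GPath G) → p.rng = q.src → GPath G
  | Sum.inl _, q, _ => q
  | Sum.inr l, Sum.inl _, _ => Sum.inr l
  | Sum.inr l, Sum.inr m, h => Sum.inr ⟨l.1 ++ m.1, by
      refine ⟨by simp [l.2.1], l.2.2.append m.2.2 ?_⟩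
      intro x hx y hy
      rw [List.getLast?_eq_some_getLast l.2.1] at hx
      rw [List.head?_eq_head m.2.1] at hy
      cases hx
      cases hy
      exact h⟩

end GPath

end DGraph

open DGraph

/-- A realization of the path algebra of the graph `G` over the field `K`:
a `K`-algebra with a basis indexed by the paths of `G`, multiplying by concatenation. -/
structure PathAlgebraOn (K : Type) [Field K] (G : DGraph) (A : Type)
    [NonUnitalRing A] [Module K A] where
  basis : Module.Basis (GPath G) K A
  mul_comp : ∀ (p q : GPath G) (h : p.rng = q.src),
      basis p * basis q = basis (p.comp q h)
  mul_ncomp : ∀ p q : GPath G, p.rng ≠ q.src → basis p * basis q = 0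

/-- The subgraph obtained by deleting a set of vertices (and all incident edges). -/
def DGraph.vertexDelete (G : DGraph) (X : Set G.V) : DGraph where
  V := {v : G.V // v ∉ X}
  Edge := {e : G.Edge // G.s e ∉ X ∧ G.r e ∉ X}
  s e := ⟨G.s e.1, e.2.1⟩
  r e := ⟨G.r e.1, e.2.2⟩


/-!
The paths of `G` avoiding `X` are exactly the paths of `G.vertexDelete X`. Sending such a basis
path to its counterpart and every other path to `0` therefore gives a multiplicative map `φ`,
surjective since the inclusion of paths induces a linear section `ψ`. Its kernel contains the
vertices of `X`. Conversely, a path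
meeting `X` lies in the ideal they generate: peeling off its first edge, either that edge has an
endpoint `v ∈ X`, whence the edge is `v * e` or `e * v`, or the rest of the path meets `X`.
Finally `a - ψ (φ a)` is a combination of paths meeting `X`, so `φ a = 0` puts `a` in the ideal.
-/

open DGraph GPath

namespace DGraph.GPath

variable {G : DGraph} {X : Set G.V}

def Avoids (X : Set G.V) : GPath G → Prop
  | Sum.inl v => v ∉ X
  | Sum.inr l => ∀ e ∈ l.1, G.s e ∉ X ∧ G.r e ∉ X

def ofVertexDelete (X : Set G.V) : GPath (G.vertexDelete X) → GPath G
  | Sum.inl v => Sum.inl v.1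
  | Sum.inr l => Sum.inr ⟨l.1.map Subtype.val,
      fun h => l.2.1 (List.map_eq_nil_iff.1 h),
      (List.isChain_map Subtype.val).2 (l.2.2.imp fun {_ _} h => congrArg Subtype.val h)⟩

theorem src_ofVertexDelete (q : GPath (G.vertexDelete X)) :
    (ofVertexDelete X q).src = q.src.1 := by
  rcases q with v | l
  · rfl
  · exact congrArg G.s (List.head_map ..)

theorem rng_ofVertexDelete (q : GPath (G.vertexDelete X)) :
    (ofVertexDelete X q).rng = q.rng.1 := by
  rcases q with v | l
  · rfl
  · exact congrArg G.r (List.getLast_map ..)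

theorem ofVertexDelete_injective : Function.Injective (ofVertexDelete (G := G) X) := by
  rintro (v | l) (w | m) h <;> simp only [ofVertexDelete, reduceCtorEq] at h
  · exact congrArg Sum.inl (Subtype.ext (Sum.inl.inj h))
  · exact congrArg Sum.inr (Subtype.ext
      (List.map_injective_iff.2 Subtype.val_injective (congrArg Subtype.val (Sum.inr.inj h))))

theorem ofVertexDelete_comp (q₁ q₂ : GPath (G.vertexDelete X)) (h : q₁.rng = q₂.src) :
    ofVertexDelete X (q₁.comp q₂ h) = (ofVertexDelete X q₁).comp (ofVertexDelete X q₂)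
      (by rw [rng_ofVertexDelete, src_ofVertexDelete, h]) := by
  rcases q₁ with v | l <;> rcases q₂ with w | m
  all_goals first | rfl | exact congrArg Sum.inr (Subtype.ext List.map_append)

theorem avoids_ofVertexDelete (q : GPath (G.vertexDelete X)) : (ofVertexDelete X q).Avoids X := by
  rcases q with v | l
  · exact v.2
  · intro e he
    obtain ⟨f, -, rfl⟩ := List.mem_map.1 he
    exact f.2

theorem Avoids.exists_ofVertexDelete {p : GPath G} (hp : p.Avoids X) :
    ∃ q, ofVertexDelete X q = p := by
  rcases p with v | ⟨l, hne, hl⟩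
  · exact ⟨Sum.inl ⟨v, hp⟩, rfl⟩
  · let l' : List (G.vertexDelete X).Edge := l.pmap Subtype.mk hp
    have hl' : l'.map Subtype.val = l :=
      (List.map_pmap hp).trans ((List.pmap_eq_map hp).trans (List.map_id l))
    refine ⟨Sum.inr ⟨l', fun h => hne (List.pmap_eq_nil_iff.1 h), ?_⟩,
      congrArg Sum.inr (Subtype.ext hl')⟩
    rw [IsComposable, ← hl'] at hl
    exact (List.isChain_map _).1 hl |>.imp fun {_ _} h => Subtype.ext h

theorem Avoids.src_notMem {p : GPath G} (hp : p.Avoids X) : p.src ∉ X := by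
  rcases p with v | l
  · exact hp
  · exact (hp _ (List.head_mem l.2.1)).1

theorem Avoids.rng_notMem {p : GPath G} (hp : p.Avoids X) : p.rng ∉ X := by
  rcases p with v | l
  · exact hp
  · exact (hp _ (List.getLast_mem l.2.1)).2

theorem Avoids.of_comp {p q : GPath G} {h : p.rng = q.src} (hpq : (p.comp q h).Avoids X) :
    p.Avoids X ∧ q.Avoids X := by
  rcases p with v | l
  · exact ⟨fun hv => hpq.src_notMem (h ▸ hv : q.src ∈ X), hpq⟩
  rcases q with w | m
  · exact ⟨hpq, fun hw => hpq.rng_notMem (h ▸ hw : rng (Sum.inr l) ∈ X)⟩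
  · exact ⟨fun e he => hpq e (List.mem_append_left _ he),
      fun e he => hpq e (List.mem_append_right _ he)⟩

end DGraph.GPath

namespace PathAlgebraOn

section Ideal

variable {K : Type} [Field K] {G : DGraph} {A : Type} [NonUnitalRing A] [Module K A]
  (PA : PathAlgebraOn K G A)

theorem basis_src_mul (p : GPath G) : PA.basis (ofVertex p.src) * PA.basis p = PA.basis p :=
  PA.mul_comp _ _ rfl

theorem basis_mul_rng (p : GPath G) : PA.basis p * PA.basis (ofVertex p.rng) = PA.basis p := by
  rw [PA.mul_comp _ _ rfl]
  rcases p with v | l <;> rfl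

theorem basis_mem_of_not_avoids {X : Set G.V} {I : TwoSidedIdeal A}
    (hI : ∀ v ∈ X, PA.basis (ofVertex v) ∈ I) {p : GPath G} (hp : ¬ p.Avoids X) :
    PA.basis p ∈ I := by
  have of_endpoint {p : GPath G} (h : p.src ∈ X ∨ p.rng ∈ X) : PA.basis p ∈ I := by
    rcases h with h | h
    · rw [← PA.basis_src_mul p]
      exact I.mul_mem_right _ _ (hI _ h)
    · rw [← PA.basis_mul_rng p]
      exact I.mul_mem_left _ _ (hI _ h)
  rcases p with v | ⟨l, hl⟩
  · exact of_endpoint (Or.inl (not_not.1 hp))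
  induction l with
  | nil => exact absurd rfl hl.1
  | cons e rest ih =>
    simp only [Avoids, List.forall_mem_cons, not_and_or, not_not] at hp
    rcases eq_or_ne rest [] with rfl | hrest
    · exact of_endpoint (by simpa using hp : G.s e ∈ X ∨ G.r e ∈ X)
    have hl' : rest ≠ [] ∧ G.IsComposable rest := ⟨hrest, hl.2.tail⟩
    have hcomp : (ofEdge e).rng = src (Sum.inr ⟨rest, hl'⟩ : GPath G) :=
      (List.isChain_cons.1 hl.2).1 _ (List.head?_eq_some_head hrest)
    have hsplit : PA.basis (ofEdge e) * PA.basis (Sum.inr ⟨rest, hl'⟩) =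
        PA.basis (Sum.inr ⟨e :: rest, hl⟩) :=
      PA.mul_comp _ _ hcomp
    rw [← hsplit]
    rcases hp with he | hmeets
    · exact I.mul_mem_right _ _ (of_endpoint he)
    · exact I.mul_mem_left _ _ (ih hl' (by simpa [Avoids] using hmeets))

theorem smul_basis_mem [IsScalarTower K A A] {I : TwoSidedIdeal A} {p : GPath G}
    (hp : PA.basis p ∈ I) (c : K) : c • PA.basis p ∈ I := by
  rw [← PA.basis_src_mul p, ← smul_mul_assoc]
  exact I.mul_mem_left _ _ hp

end Ideal

section VertexDelete

variable {K : Type} [Field K] {G : DGraph} {X : Set G.V}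
  {A B : Type} [NonUnitalRing A] [Module K A] [NonUnitalRing B] [Module K B]
  (PA : PathAlgebraOn K G A) (PB : PathAlgebraOn K (G.vertexDelete X) B)

noncomputable def toVertexDeleteₗ : A →ₗ[K] B :=
  PA.basis.constr K (Function.extend (ofVertexDelete X) PB.basis 0)

noncomputable def ofVertexDeleteₗ : B →ₗ[K] A :=
  PB.basis.constr K (fun q => PA.basis (ofVertexDelete X q))

theorem toVertexDeleteₗ_basis_ofVertexDelete (q : GPath (G.vertexDelete X)) :
    PA.toVertexDeleteₗ PB (PA.basis (ofVertexDelete X q)) = PB.basis q := by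
  rw [toVertexDeleteₗ, Module.Basis.constr_basis, ofVertexDelete_injective.extend_apply]

theorem toVertexDeleteₗ_basis_of_not_avoids {p : GPath G} (hp : ¬ p.Avoids X) :
    PA.toVertexDeleteₗ PB (PA.basis p) = 0 := by
  rw [toVertexDeleteₗ, Module.Basis.constr_basis, Function.extend_apply']
  · rfl
  · rintro ⟨q, rfl⟩
    exact hp (avoids_ofVertexDelete q)

theorem ofVertexDeleteₗ_basis (q : GPath (G.vertexDelete X)) :
    PA.ofVertexDeleteₗ PB (PB.basis q) = PA.basis (ofVertexDelete X q) :=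
  Module.Basis.constr_basis _ _ _ _

theorem toVertexDeleteₗ_ofVertexDeleteₗ (b : B) :
    PA.toVertexDeleteₗ PB (PA.ofVertexDeleteₗ PB b) = b := by
  have h : PA.toVertexDeleteₗ PB ∘ₗ PA.ofVertexDeleteₗ PB = LinearMap.id :=
    PB.basis.ext fun q => by
      rw [LinearMap.comp_apply, ofVertexDeleteₗ_basis, toVertexDeleteₗ_basis_ofVertexDelete,
        LinearMap.id_apply]
  exact LinearMap.congr_fun h b

theorem toVertexDeleteₗ_basis_mul_basis (p q : GPath G) :
    PA.toVertexDeleteₗ PB (PA.basis p * PA.basis q) =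
      PA.toVertexDeleteₗ PB (PA.basis p) * PA.toVertexDeleteₗ PB (PA.basis q) := by
  by_cases hpq : p.Avoids X ∧ q.Avoids X
  · obtain ⟨p, rfl⟩ := hpq.1.exists_ofVertexDelete
    obtain ⟨q, rfl⟩ := hpq.2.exists_ofVertexDelete
    rw [toVertexDeleteₗ_basis_ofVertexDelete, toVertexDeleteₗ_basis_ofVertexDelete]
    by_cases h : p.rng = q.src
    · rw [PA.mul_comp _ _ (by rw [rng_ofVertexDelete, src_ofVertexDelete, h]),
        ← ofVertexDelete_comp p q h, toVertexDeleteₗ_basis_ofVertexDelete, PB.mul_comp _ _ h]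
    · rw [PB.mul_ncomp _ _ h, PA.mul_ncomp, map_zero]
      rw [rng_ofVertexDelete, src_ofVertexDelete]
      exact fun h' => h (Subtype.ext h')
  · have hzero :
        PA.toVertexDeleteₗ PB (PA.basis p) * PA.toVertexDeleteₗ PB (PA.basis q) = 0 := by
      rcases not_and_or.1 hpq with hp | hq
      · rw [toVertexDeleteₗ_basis_of_not_avoids PA PB hp, zero_mul]
      · rw [toVertexDeleteₗ_basis_of_not_avoids PA PB hq, mul_zero]
    rw [hzero]
    by_cases h : p.rng = q.src
    · rw [PA.mul_comp _ _ h, toVertexDeleteₗ_basis_of_not_avoids PA PB fun hc => hpq hc.of_comp]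
    · rw [PA.mul_ncomp _ _ h, map_zero]

theorem sub_ofVertexDeleteₗ_toVertexDeleteₗ_mem [IsScalarTower K A A] {I : TwoSidedIdeal A}
    (hI : ∀ v ∈ X, PA.basis (ofVertex v) ∈ I) (a : A) :
    a - PA.ofVertexDeleteₗ PB (PA.toVertexDeleteₗ PB a) ∈ I := by
  let θ := LinearMap.id - PA.ofVertexDeleteₗ PB ∘ₗ PA.toVertexDeleteₗ PB
  have hθ (p : GPath G) (c : K) : c • θ (PA.basis p) ∈ I := by
    by_cases hp : p.Avoids X
    · obtain ⟨q, rfl⟩ := hp.exists_ofVertexDelete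
      simp [θ, toVertexDeleteₗ_basis_ofVertexDelete, ofVertexDeleteₗ_basis]
    · simpa [θ, toVertexDeleteₗ_basis_of_not_avoids PA PB hp]
        using PA.smul_basis_mem (PA.basis_mem_of_not_avoids hI hp) c
  change θ a ∈ I
  rw [← PA.basis.linearCombination_repr a, Finsupp.linearCombination_apply, map_finsuppSum]
  exact sum_mem fun p _ => by simpa only [map_smul] using hθ p _

variable [SMulCommClass K A A] [IsScalarTower K A A] [SMulCommClass K B B] [IsScalarTower K B B]

theorem toVertexDeleteₗ_mul (x y : A) :
    PA.toVertexDeleteₗ PB (x * y) = PA.toVertexDeleteₗ PB x * PA.toVertexDeleteₗ PB y := by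
  have h : (LinearMap.mul K A).compr₂ (PA.toVertexDeleteₗ PB) =
      (LinearMap.mul K B).compl₁₂ (PA.toVertexDeleteₗ PB) (PA.toVertexDeleteₗ PB) :=
    PA.basis.ext fun p => PA.basis.ext fun q => PA.toVertexDeleteₗ_basis_mul_basis PB p q
  exact LinearMap.congr_fun₂ h x y

noncomputable def toVertexDelete : A →ₙₐ[K] B :=
  { PA.toVertexDeleteₗ PB with
    map_zero' := (PA.toVertexDeleteₗ PB).map_zero
    map_mul' := PA.toVertexDeleteₗ_mul PB }

end VertexDelete

end PathAlgebraOn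

/-- `KE/(X) ≅ KF` where `F` is the collapse of `E` through the vertex set `X`. -/
theorem stmt0 (K : Type) [Field K] (G : DGraph) (X : Set G.V)
    (A B : Type) [NonUnitalRing A] [Module K A] [SMulCommClass K A A] [IsScalarTower K A A]
    [NonUnitalRing B] [Module K B] [SMulCommClass K B B] [IsScalarTower K B B]
    (PA : PathAlgebraOn K G A) (PB : PathAlgebraOn K (G.vertexDelete X) B) :
    ∃ φ : A →ₙₐ[K] B, Function.Surjective φ ∧
      ∀ a : A, φ a = 0 ↔
        a ∈ TwoSidedIdeal.span {x : A | ∃ v ∈ X, x = PA.basis (GPath.ofVertex v)} := by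
  set I := TwoSidedIdeal.span {x : A | ∃ v ∈ X, x = PA.basis (GPath.ofVertex v)}
  have hI : ∀ v ∈ X, PA.basis (ofVertex v) ∈ I :=
    fun v hv => TwoSidedIdeal.subset_span ⟨v, hv, rfl⟩
  refine ⟨PA.toVertexDelete PB, fun b => ⟨_, PA.toVertexDeleteₗ_ofVertexDeleteₗ PB b⟩,
    fun a => ⟨fun ha => ?_, fun ha => ?_⟩⟩
  · replace ha : PA.toVertexDeleteₗ PB a = 0 := ha
    simpa [ha] using PA.sub_ofVertexDeleteₗ_toVertexDeleteₗ_mem PB hI a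
  · refine (TwoSidedIdeal.mem_ker _).1 (TwoSidedIdeal.mem_span_iff.1 ha _ ?_)
    rintro _ ⟨v, hv, rfl⟩
    exact (TwoSidedIdeal.mem_ker _).2
      (PA.toVertexDeleteₗ_basis_of_not_avoids PB (p := ofVertex v) fun h => h hv)
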